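/- Let r ≥ 2, h ≥ 1, b₁, b₂ ≥ 1 be integers and ε > 0, and let m : ℕ → ℕ satisfy m(0) = 0 and m(n+1) ≥ m(n) + M(m(n))·h for all n ≥ 0. Let ñ ≥ 1 be an integer and let G be a (b₁,b₂)-colored 𝔯-partite graph on Ω. For n < ñ and φ ∈ Φ(m(n)) write G* := G/φ, and let η be defined for G* with M = M(m(n)). Then for every I ∈ binom(𝔯,2): ( E_n E_{φ∈Φ(m(n))} E_{ẽ∈Ω_I}[ √(η(G*⟨ẽ⟩)) ] )² ≤ b₂/ñ, where n is uniform on {0, …, ñ−1} and φ, ẽ are random. -/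

import Mathlib

open Finset
open scoped BigOperators Classical

/-! ## Framework: colored partite graphs, complexes, partitionwise maps,
regularization, relative densities and regularity (Ishigami's setting). -/

/-- Partitionwise maps `Φ(h)`: `h` sample vertices in each of the `r` parts. -/
abbrev PMap {r : ℕ} (Ω : Fin r → Type) (h : ℕ) : Type := ∀ i : Fin r, Fin h → Ω i

/-- The product weight of a partitionwise map (each sample independent). -/
noncomputable def pmapWeight {r : ℕ} (Ω : Fin r → Type) [∀ i, Fintype (Ω i)]
    (w : ∀ i, Ω i → ℝ) {h : ℕ} (φ : PMap Ω h) : ℝ :=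
  ∏ i : Fin r, ∏ a : Fin h, w i (φ i a)

/-- Expectation over a random partitionwise map in `Φ(h)`. -/
noncomputable def EPhi {r : ℕ} (Ω : Fin r → Type) [∀ i, Fintype (Ω i)]
    (w : ∀ i, Ω i → ℝ) (h : ℕ) (f : PMap Ω h → ℝ) : ℝ :=
  ∑ φ : PMap Ω h, pmapWeight Ω w φ * f φ

/-- Conditional expectation over a random partitionwise map in `Φ(h)`. -/
noncomputable def EPhiCond {r : ℕ} (Ω : Fin r → Type) [∀ i, Fintype (Ω i)]
    (w : ∀ i, Ω i → ℝ) (h : ℕ) (A : PMap Ω h → Prop) (f : PMap Ω h → ℝ) : ℝ :=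
  (∑ φ : PMap Ω h, if A φ then pmapWeight Ω w φ * f φ else 0) /
  (∑ φ : PMap Ω h, if A φ then pmapWeight Ω w φ else 0)

/-- A colored `𝔯`-partite graph on vertex sets `Ω i`: color sets `C1 i` (for vertices,
i.e. index-`{i}` edges) and `C2 i j` (for index-`{i,j}` edges), together with coloring
maps, symmetric in the two endpoints. -/
structure CGraph {r : ℕ} (Ω : Fin r → Type) (K₁ K₂ : Type) where
  C1 : Fin r → Finset K₁
  C2 : Fin r → Fin r → Finset K₂
  vCol : ∀ i, Ω i → K₁
  eCol : ∀ i j, Ω i → Ω j → K₂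
  eSymm : ∀ i j x y, eCol i j x y = eCol j i y x
  c2Symm : ∀ i j, C2 i j = C2 j i
  vMem : ∀ i x, vCol i x ∈ C1 i
  eMem : ∀ i j x y, eCol i j x y ∈ C2 i j

/-- `G` is `(b₁,b₂)`-colored: each color set `C_I` has at most `b_{|I|}` elements. -/
def CGraph.Bounded {r : ℕ} {Ω : Fin r → Type} {K₁ K₂ : Type}
    (G : CGraph Ω K₁ K₂) (b₁ b₂ : ℕ) : Prop :=
  (∀ i, (G.C1 i).card ≤ b₁) ∧ ∀ i j, i ≠ j → (G.C2 i j).card ≤ b₂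

/-- Relative density `d_G(c)` of a vertex (index-`{i}`) total color `c`:
the probability that a random vertex of `Ω i` has color `c`. -/
noncomputable def dV {r : ℕ} (Ω : Fin r → Type) [∀ i, Fintype (Ω i)]
    (w : ∀ i, Ω i → ℝ) {K₁ K₂ : Type} (G : CGraph Ω K₁ K₂) (i : Fin r) (c : K₁) : ℝ :=
  ∑ x : Ω i, if G.vCol i x = c then w i x else 0

/-- Relative density `d_G(c₂; ci, cj)` of an index-`{i,j}` total color:
the conditional probability that a random edge has color `c₂` given that its
endpoints have colors `ci`, `cj`. -/
noncomputable def dE {r : ℕ} (Ω : Fin r → Type) [∀ i, Fintype (Ω i)]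
    (w : ∀ i, Ω i → ℝ) {K₁ K₂ : Type} (G : CGraph Ω K₁ K₂) (i j : Fin r)
    (c₂ : K₂) (ci cj : K₁) : ℝ :=
  (∑ x : Ω i, ∑ y : Ω j,
      if G.eCol i j x y = c₂ ∧ G.vCol i x = ci ∧ G.vCol j y = cj then w i x * w j y else 0) /
  (∑ x : Ω i, ∑ y : Ω j, if G.vCol i x = ci ∧ G.vCol j y = cj then w i x * w j y else 0)

/-- A (simplicial) complex with `h` vertices in each of the `r` parts: a colored
partite graph where `none` is the (unique) invisible color of each index, and any
edge containing an invisible vertex is invisible. -/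
structure SComplex (r h : ℕ) (K₁ K₂ : Type) where
  vCol : Fin r → Fin h → Option K₁
  eCol : Fin r → Fin r → Fin h → Fin h → Option K₂
  eSymm : ∀ i j a b, eCol i j a b = eCol j i b a
  loopless : ∀ i a b, eCol i i a b = none
  down : ∀ i j a b, vCol i a = none → eCol i j a b = none

/-- `S ∈ S_{h,G}` : the visible colors of the complex `S` are (identified with)
colors of `G`. -/
def SComplex.MemS {r h : ℕ} {Ω : Fin r → Type} {K₁ K₂ : Type}
    (S : SComplex r h K₁ K₂) (G : CGraph Ω K₁ K₂) : Prop :=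
  (∀ i a c, S.vCol i a = some c → c ∈ G.C1 i) ∧
  (∀ i j a b c, S.eCol i j a b = some c → c ∈ G.C2 i j)

/-- `𝕍₁(S)`: the visible vertices of `S`. -/
noncomputable def V1 {r h : ℕ} {K₁ K₂ : Type} (S : SComplex r h K₁ K₂) :
    Finset (Fin r × Fin h) :=
  univ.filter fun p => S.vCol p.1 p.2 ≠ none

/-- `𝕍₂(S)`: the visible (size-2) edges of `S`, listed once each (`i < j`). -/
noncomputable def V2 {r h : ℕ} {K₁ K₂ : Type} (S : SComplex r h K₁ K₂) :
    Finset (Fin r × Fin r × Fin h × Fin h) :=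
  univ.filter fun q => q.1 < q.2.1 ∧ S.eCol q.1 q.2.1 q.2.2.1 q.2.2.2 ≠ none

/-- `d_G(S⟨v⟩)` for a vertex `v` of `S` (junk value `1` on invisible vertices). -/
noncomputable def dVS {r h : ℕ} (Ω : Fin r → Type) [∀ i, Fintype (Ω i)]
    (w : ∀ i, Ω i → ℝ) {K₁ K₂ : Type} (G : CGraph Ω K₁ K₂)
    (S : SComplex r h K₁ K₂) (p : Fin r × Fin h) : ℝ :=
  match S.vCol p.1 p.2 with
  | some c => dV Ω w G p.1 c
  | none => 1

/-- `d_G(S⟨e⟩)` for a size-2 edge `e` of `S` (junk value `1` on invisible edges). -/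
noncomputable def dES {r h : ℕ} (Ω : Fin r → Type) [∀ i, Fintype (Ω i)]
    (w : ∀ i, Ω i → ℝ) {K₁ K₂ : Type} (G : CGraph Ω K₁ K₂)
    (S : SComplex r h K₁ K₂) (q : Fin r × Fin r × Fin h × Fin h) : ℝ :=
  match S.eCol q.1 q.2.1 q.2.2.1 q.2.2.2, S.vCol q.1 q.2.2.1, S.vCol q.2.1 q.2.2.2 with
  | some c₂, some ci, some cj => dE Ω w G q.1 q.2.1 c₂ ci cj
  | _, _, _ => 1

/-- The event `G(φ(v)) = S(v)` for all visible vertices `v` of `S`. -/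
def vEvent {r h : ℕ} {Ω : Fin r → Type} {K₁ K₂ : Type} (G : CGraph Ω K₁ K₂)
    (S : SComplex r h K₁ K₂) (φ : PMap Ω h) : Prop :=
  ∀ p ∈ V1 S, some (G.vCol p.1 (φ p.1 p.2)) = S.vCol p.1 p.2

/-- The event `G(φ(e)) = S(e)` for all visible size-2 edges `e` of `S`. -/
def eEvent {r h : ℕ} {Ω : Fin r → Type} {K₁ K₂ : Type} (G : CGraph Ω K₁ K₂)
    (S : SComplex r h K₁ K₂) (φ : PMap Ω h) : Prop :=
  ∀ q ∈ V2 S, some (G.eCol q.1 q.2.1 (φ q.1 q.2.2.1) (φ q.2.1 q.2.2.2)) =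
    S.eCol q.1 q.2.1 q.2.2.1 q.2.2.2

/-- `P_{φ∈Φ(h)}[G(φ(e)) = S(e) for all e ∈ 𝕍(S)]`. -/
noncomputable def countProb {r h : ℕ} (Ω : Fin r → Type) [∀ i, Fintype (Ω i)]
    (w : ∀ i, Ω i → ℝ) {K₁ K₂ : Type} (G : CGraph Ω K₁ K₂)
    (S : SComplex r h K₁ K₂) : ℝ :=
  EPhi Ω w h fun φ => if vEvent G S φ ∧ eEvent G S φ then 1 else 0

/-- Value of an error function `δ` (defined on index-2 total colors) at `S⟨e⟩`. -/
noncomputable def deltaS {r h : ℕ} {K₁ K₂ : Type} (δ : Fin r → Fin r → K₂ → K₁ → K₁ → ℝ)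
    (S : SComplex r h K₁ K₂) (q : Fin r × Fin r × Fin h × Fin h) : ℝ :=
  match S.eCol q.1 q.2.1 q.2.2.1 q.2.2.2, S.vCol q.1 q.2.2.1, S.vCol q.2.1 q.2.2.2 with
  | some c₂, some ci, some cj => δ q.1 q.2.1 c₂ ci cj
  | _, _, _ => 0

/-- The counting equation (\ref{lj19}) for one complex `S`:
`P[G(φ(e)) = S(e) ∀ e ∈ 𝕍(S)] = ∏_{v∈𝕍₁(S)} d_G(S⟨v⟩) · ∏_{e∈𝕍₂(S)} (d_G(S⟨e⟩) ±̇ δ(S⟨e⟩))`,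
where `a ±̇ b` denotes a suitable number `c` with `max 0 (a-b) ≤ c ≤ min 1 (a+b)`. -/
def CountEqAt {r h : ℕ} (Ω : Fin r → Type) [∀ i, Fintype (Ω i)]
    (w : ∀ i, Ω i → ℝ) {K₁ K₂ : Type} (G : CGraph Ω K₁ K₂)
    (δ : Fin r → Fin r → K₂ → K₁ → K₁ → ℝ) (S : SComplex r h K₁ K₂) : Prop :=
  ∃ c : Fin r × Fin r × Fin h × Fin h → ℝ,
    (∀ q ∈ V2 S, max 0 (dES Ω w G S q - deltaS δ S q) ≤ c q ∧
        c q ≤ min 1 (dES Ω w G S q + deltaS δ S q)) ∧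
    countProb Ω w G S = (∏ p ∈ V1 S, dVS Ω w G S p) * ∏ q ∈ V2 S, c q

/-- `δ` is an `h`-error function of `G`: the counting equation holds for every
`S ∈ S_{h,G}`. -/
def IsErrorFun {r : ℕ} (Ω : Fin r → Type) [∀ i, Fintype (Ω i)]
    (w : ∀ i, Ω i → ℝ) {K₁ K₂ : Type} (G : CGraph Ω K₁ K₂) (h : ℕ)
    (δ : Fin r → Fin r → K₂ → K₁ → K₁ → ℝ) : Prop :=
  ∀ S : SComplex r h K₁ K₂, S.MemS G → CountEqAt Ω w G δ S

/-- `E_{e∈Ω_I}[δ(G⟨e⟩)]` for `I = {i,j}`. -/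
noncomputable def EdgeDeltaAvg {r : ℕ} (Ω : Fin r → Type) [∀ i, Fintype (Ω i)]
    (w : ∀ i, Ω i → ℝ) {K₁ K₂ : Type} (G : CGraph Ω K₁ K₂)
    (δ : Fin r → Fin r → K₂ → K₁ → K₁ → ℝ) (i j : Fin r) : ℝ :=
  ∑ x : Ω i, ∑ y : Ω j,
    w i x * w j y * δ i j (G.eCol i j x y) (G.vCol i x) (G.vCol j y)

/-- `G` is `(ε,h)`-regular. -/
def IsRegularG {r : ℕ} (Ω : Fin r → Type) [∀ i, Fintype (Ω i)]
    (w : ∀ i, Ω i → ℝ) {K₁ K₂ : Type} (G : CGraph Ω K₁ K₂) (h : ℕ) (ε : ℝ) : Prop :=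
  ∃ δ : Fin r → Fin r → K₂ → K₁ → K₁ → ℝ,
    (∀ i j c₂ ci cj, 0 ≤ δ i j c₂ ci cj) ∧
    IsErrorFun Ω w G h δ ∧
    ∀ i j : Fin r, i ≠ j → EdgeDeltaAvg Ω w G δ i j ≤ ε / (G.C2 i j).card

/-- `reg_h(G)`: the minimum `ε` such that `G` is `(ε,h)`-regular. -/
noncomputable def reg {r : ℕ} (Ω : Fin r → Type) [∀ i, Fintype (Ω i)]
    (w : ∀ i, Ω i → ℝ) {K₁ K₂ : Type} (G : CGraph Ω K₁ K₂) (h : ℕ) : ℝ :=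
  sInf {ε : ℝ | IsRegularG Ω w G h ε}

/-- The regularization `G/φ` of `G` by a partitionwise map `φ ∈ Φ(m)`: each vertex
`v ∈ Ω i` is recolored by its original color together with the colors of all edges
joining `v` to the sample points of `φ` in the other parts. Size-2 edges keep
their colors. -/
noncomputable def regz {r : ℕ} (Ω : Fin r → Type) [∀ i, Fintype (Ω i)]
    {K₁ K₂ : Type} [Fintype K₁] [Fintype K₂] (G : CGraph Ω K₁ K₂) {m : ℕ}
    (φ : PMap Ω m) : CGraph Ω (K₁ × (Fin r → Fin m → Option K₂)) K₂ where
  C1 i := univ.filter fun p : K₁ × (Fin r → Fin m → Option K₂) =>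
    p.1 ∈ G.C1 i ∧ ∀ j b, if j = i then p.2 j b = none
      else ∃ c ∈ G.C2 i j, p.2 j b = some c
  C2 := G.C2
  vCol i x := (G.vCol i x, fun j b => if j = i then none else some (G.eCol i j x (φ j b)))
  eCol := G.eCol
  eSymm := G.eSymm
  c2Symm := G.c2Symm
  vMem := by
    intro i x
    simp only [mem_filter, mem_univ, true_and]
    refine ⟨G.vMem i x, fun j b => ?_⟩
    by_cases hj : j = i
    · simp [hj]
    · simp only [hj, if_neg hj]
      exact ⟨G.eCol i j x (φ j b), G.eMem i j x (φ j b), rfl⟩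
  eMem := G.eMem

/-- Conditional expectation of `f` over a random pair `e = (x,y) ∈ Ω_{i} × Ω_{j}`
given the event `A`. -/
noncomputable def condEE {r : ℕ} (Ω : Fin r → Type) [∀ i, Fintype (Ω i)]
    (w : ∀ i, Ω i → ℝ) (i j : Fin r) (A : Ω i → Ω j → Prop) (f : Ω i → Ω j → ℝ) : ℝ :=
  (∑ x : Ω i, ∑ y : Ω j, if A x y then w i x * w j y * f x y else 0) /
  (∑ x : Ω i, ∑ y : Ω j, if A x y then w i x * w j y else 0)

/-- `e ≈_{∂(G/ψ)} e'` : the two pairs have the same frame color in the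
regularization `G/ψ`. -/
def frameRel {r : ℕ} (Ω : Fin r → Type) [∀ i, Fintype (Ω i)]
    {K₁ K₂ : Type} [Fintype K₁] [Fintype K₂] (G : CGraph Ω K₁ K₂) {m : ℕ}
    (ψ : PMap Ω m) (i j : Fin r) (x : Ω i) (y : Ω j) (x' : Ω i) (y' : Ω j) : Prop :=
  (regz Ω G ψ).vCol i x = (regz Ω G ψ).vCol i x' ∧
  (regz Ω G ψ).vCol j y = (regz Ω G ψ).vCol j y'

/-- `η(c₂; ci, cj)` (eq. (\ref{061220})) computed in `G`, with `N` random sample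
vertices in each part (`N = M·h` in the paper). -/
noncomputable def eta {r : ℕ} (Ω : Fin r → Type) [∀ i, Fintype (Ω i)]
    (w : ∀ i, Ω i → ℝ) {K₁ K₂ : Type} [Fintype K₁] [Fintype K₂]
    (G : CGraph Ω K₁ K₂) (N : ℕ) (i j : Fin r) (c₂ : K₂) (ci cj : K₁) : ℝ :=
  EPhi Ω w N fun ψ =>
    condEE Ω w i j (fun x' y' => G.vCol i x' = ci ∧ G.vCol j y' = cj) fun x' y' =>
      (condEE Ω w i j (fun x y => frameRel Ω G ψ i j x y x' y')
          (fun x y => if G.eCol i j x y = c₂ then 1 else 0) -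
        dE Ω w G i j c₂ ci cj) ^ 2

/-- `η(S⟨e⟩)` for a size-2 edge of a complex `S` (junk value `0` if invisible). -/
noncomputable def etaS {r h : ℕ} (Ω : Fin r → Type) [∀ i, Fintype (Ω i)]
    (w : ∀ i, Ω i → ℝ) {K₁ K₂ : Type} [Fintype K₁] [Fintype K₂]
    (G : CGraph Ω K₁ K₂) (N : ℕ) (S : SComplex r h K₁ K₂)
    (q : Fin r × Fin r × Fin h × Fin h) : ℝ :=
  match S.eCol q.1 q.2.1 q.2.2.1 q.2.2.2, S.vCol q.1 q.2.2.1, S.vCol q.2.1 q.2.2.2 with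
  | some c₂, some ci, some cj => eta Ω w G N q.1 q.2.1 c₂ ci cj
  | _, _, _ => 0

/-- `ε₁ := (ε/(6 b₂ binom(r,2)))²`. -/
noncomputable def eps1 (r b₂ : ℕ) (ε : ℝ) : ℝ := (ε / (6 * b₂ * r.choose 2)) ^ 2

/-- `C := √2 · binom(r,2) h² · (b₂/√ε₁)^{binom(r,2)h² − 1}`. -/
noncomputable def Cconst (r h b₂ : ℕ) (ε : ℝ) : ℝ :=
  Real.sqrt 2 * r.choose 2 * h ^ 2 *
    ((b₂ : ℝ) / Real.sqrt (eps1 r b₂ ε)) ^ (r.choose 2 * h ^ 2 - 1)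

/-- `M(m) := (b₁ b₂^{(r−1)m} / √ε₁)^{rh}` (as a sample count). -/
noncomputable def Mconst (r h b₁ b₂ : ℕ) (ε : ℝ) (m : ℕ) : ℕ :=
  ⌈(((b₁ : ℝ) * (b₂ : ℝ) ^ ((r - 1) * m)) / Real.sqrt (eps1 r b₂ ε)) ^ (r * h)⌉₊

/-- A vertex total color `c` of index `{i}` is bad. -/
def BadV {r : ℕ} (Ω : Fin r → Type) [∀ i, Fintype (Ω i)]
    (w : ∀ i, Ω i → ℝ) {K₁ K₂ : Type} (G : CGraph Ω K₁ K₂) (ε₁ : ℝ)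
    (i : Fin r) (c : K₁) : Prop :=
  dV Ω w G i c ≤ Real.sqrt ε₁ / (G.C1 i).card

/-- An index-`{i,j}` total color `(c₂; ci, cj)` is bad: some nonempty `I* ⊆ {i,j}`
has relative density at most `√ε₁/|C_{I*}|`. -/
def BadE {r : ℕ} (Ω : Fin r → Type) [∀ i, Fintype (Ω i)]
    (w : ∀ i, Ω i → ℝ) {K₁ K₂ : Type} (G : CGraph Ω K₁ K₂) (ε₁ : ℝ)
    (i j : Fin r) (c₂ : K₂) (ci cj : K₁) : Prop :=
  BadV Ω w G ε₁ i ci ∨ BadV Ω w G ε₁ j cj ∨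
    dE Ω w G i j c₂ ci cj ≤ Real.sqrt ε₁ / (G.C2 i j).card

/-- The error function `δ` of the paper: `1` on bad total colors, `C·√η` otherwise. -/
noncomputable def deltaDef {r : ℕ} (Ω : Fin r → Type) [∀ i, Fintype (Ω i)]
    (w : ∀ i, Ω i → ℝ) {K₁ K₂ : Type} [Fintype K₁] [Fintype K₂]
    (G : CGraph Ω K₁ K₂) (ε₁ Cc : ℝ) (N : ℕ)
    (i j : Fin r) (c₂ : K₂) (ci cj : K₁) : ℝ :=
  if BadE Ω w G ε₁ i j c₂ ci cj then 1 else Cc * Real.sqrt (eta Ω w G N i j c₂ ci cj)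

/-- `∏_{e∈D}(𝟙[G(φ(e)) = S(e)] − d_G(S⟨e⟩))`, single factor. -/
noncomputable def indMinusD {r h : ℕ} (Ω : Fin r → Type) [∀ i, Fintype (Ω i)]
    (w : ∀ i, Ω i → ℝ) {K₁ K₂ : Type} (G : CGraph Ω K₁ K₂)
    (S : SComplex r h K₁ K₂) (φ : PMap Ω h) (q : Fin r × Fin r × Fin h × Fin h) : ℝ :=
  (if some (G.eCol q.1 q.2.1 (φ q.1 q.2.2.1) (φ q.2.1 q.2.2.2)) =
      S.eCol q.1 q.2.1 q.2.2.1 q.2.2.2 then 1 else 0) - dES Ω w G S q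


/-! Fix the pair `I = {i, j}` and let `A(M)` be the energy `∑_c ‖E[1_{G(e) = c} | ∂(G/φ)]‖²` of
the frame partition of `G/φ`, averaged over `φ ∈ Φ(M)`; it lies in `[0, 1]`. Regularizing `G/φ`
by `ψ ∈ Φ(N)` is regularizing `G` by `φ` followed by `ψ`, and it refines the frame partition, so by
Pythagoras the energy increment is the mean square change of the conditional densities. That
change dominates the conditional variance defining `η`, whence `E_φ E_e η ≤ A(M + N) - A(M)`, and
by Jensen `(E_φ E_e √η)² ≤ A(m(n+1)) - A(m(n))`. Averaging over `n < ñ`, Cauchy–Schwarz and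
telescoping give the bound `1/ñ ≤ b₂/ñ`. -/

theorem sq_sum_mul_le_sum_mul_sq {ι : Type*} {s : Finset ι} {p : ι → ℝ}
    (hp : ∀ a ∈ s, 0 ≤ p a) (hp1 : ∑ a ∈ s, p a = 1) (f : ι → ℝ) :
    (∑ a ∈ s, p a * f a) ^ 2 ≤ ∑ a ∈ s, p a * f a ^ 2 :=
  (even_two.convexOn_pow (𝕜 := ℝ)).map_sum_le hp hp1 fun _ _ => Set.mem_univ _

theorem sq_mean_le_of_sq_le_sub {s a : ℕ → ℝ} (hs : ∀ n, s n ^ 2 ≤ a (n + 1) - a n)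
    (ha0 : 0 ≤ a 0) (ha1 : ∀ n, a n ≤ 1) (nt : ℕ) :
    ((1 / nt : ℝ) * ∑ n ∈ range nt, s n) ^ 2 ≤ 1 / nt := by
  calc ((1 / nt : ℝ) * ∑ n ∈ range nt, s n) ^ 2
      = (1 / nt : ℝ) ^ 2 * (∑ n ∈ range nt, s n) ^ 2 := mul_pow _ _ _
    _ ≤ (1 / nt : ℝ) ^ 2 * (nt * ∑ n ∈ range nt, (a (n + 1) - a n)) := by
        gcongr
        calc (∑ n ∈ range nt, s n) ^ 2 ≤ nt * ∑ n ∈ range nt, s n ^ 2 := by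
              simpa using sq_sum_le_card_mul_sum_sq (s := range nt) (f := s)
          _ ≤ nt * ∑ n ∈ range nt, (a (n + 1) - a n) := by gcongr with n; exact hs n
    _ = 1 / nt * (a nt - a 0) := by
        rw [sum_range_sub]
        rcases eq_or_ne (nt : ℝ) 0 with h0 | h0 <;> field_simp [h0]
    _ ≤ 1 / nt := mul_le_of_le_one_right (by positivity) (by linarith [ha1 nt])

section CondAvg

variable {α β β' : Type*} [Fintype α] (W : α → ℝ)

/-- The conditional expectation `E_W[v | F]` at `q`; it is `0` on fibres of weight `0`. -/
noncomputable def condAvg (F : α → β) (v : α → ℝ) (q : α) : ℝ :=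
  (∑ p, if F p = F q then W p * v p else 0) / ∑ p, if F p = F q then W p else 0

variable {W}

theorem condAvg_nonneg (hW : ∀ p, 0 ≤ W p) (F : α → β) {v : α → ℝ} (hv : ∀ p, 0 ≤ v p)
    (q : α) : 0 ≤ condAvg W F v q :=
  div_nonneg (sum_nonneg fun p _ => ite_nonneg (mul_nonneg (hW p) (hv p)) le_rfl)
    (sum_nonneg fun p _ => ite_nonneg (hW p) le_rfl)

theorem condAvg_le_one (hW : ∀ p, 0 ≤ W p) (F : α → β) {v : α → ℝ} (hv : ∀ p, v p ≤ 1)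
    (q : α) : condAvg W F v q ≤ 1 := by
  refine div_le_one_of_le₀ (sum_le_sum fun p _ => ?_)
    (sum_nonneg fun p _ => ite_nonneg (hW p) le_rfl)
  split_ifs
  · exact mul_le_of_le_one_right (hW p) (hv p)
  · rfl

theorem condAvg_eq_of_eq {F : α → β} (v : α → ℝ) {q q' : α} (h : F q = F q') :
    condAvg W F v q = condAvg W F v q' := by
  simp only [condAvg, h]

theorem condAvg_congr {F : α → β} {v v' : α → ℝ} {q : α}
    (h : ∀ p, F p = F q → v p = v' p) : condAvg W F v q = condAvg W F v' q := by
  unfold condAvg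
  congr 1
  refine sum_congr rfl fun p _ => ?_
  split_ifs with hp
  · rw [h p hp]
  · rfl

theorem condAvg_congr_ker {F₁ : α → β} {F₂ : α → β'} (h : Setoid.ker F₁ = Setoid.ker F₂) :
    condAvg W F₁ = condAvg W F₂ := by
  have hker : ∀ p q, (F₁ p = F₁ q) = (F₂ p = F₂ q) := fun p q =>
    propext (by simpa only [Setoid.ker_def] using Setoid.ext_iff.mp h p q)
  funext v q
  simp only [condAvg, hker]

theorem sum_mul_mul_condAvg_comm (F : α → β) (u v : α → ℝ) :
    ∑ q, W q * u q * condAvg W F v q = ∑ q, W q * v q * condAvg W F u q := by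
  have expand : ∀ u v : α → ℝ, ∑ q, W q * u q * condAvg W F v q =
      ∑ q, ∑ p, if F p = F q then
        W q * u q * (W p * v p) / ∑ p', (if F p' = F q then W p' else 0) else 0 := by
    intro u v
    refine sum_congr rfl fun q _ => ?_
    rw [condAvg, sum_div, mul_sum]
    exact sum_congr rfl fun p _ => by split_ifs <;> ring
  rw [expand u v, expand v u, sum_comm]
  refine sum_congr rfl fun q _ => sum_congr rfl fun p _ => ?_
  by_cases hqp : F q = F p
  · simp only [hqp, if_true]
    ring
  · simp [hqp, Ne.symm hqp]

theorem mul_condAvg_condAvg_of_ker_le (hW : ∀ p, 0 ≤ W p) {F' : α → β'} {F : α → β}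
    (h : Setoid.ker F' ≤ Setoid.ker F) (v : α → ℝ) (q : α) :
    W q * condAvg W F' (condAvg W F v) q = W q * condAvg W F v q := by
  rcases (hW q).eq_or_lt with hq | hq
  · simp [← hq]
  have hden : W q ≤ ∑ p, if F' p = F' q then W p else 0 := by
    simpa using single_le_sum (f := fun p => if F' p = F' q then W p else 0)
      (fun p _ => ite_nonneg (hW p) le_rfl) (mem_univ q)
  have hnum : (∑ p, if F' p = F' q then W p * condAvg W F v p else 0) =
      condAvg W F v q * ∑ p, if F' p = F' q then W p else 0 := by
    rw [mul_sum]
    refine sum_congr rfl fun p _ => ?_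
    split_ifs with hp
    · rw [condAvg_eq_of_eq v (Setoid.le_def.mp h (Setoid.ker_def.mpr hp))]
      ring
    · simp
  rw [condAvg, hnum, mul_div_cancel_right₀ _ (hq.trans_le hden).ne']

theorem sum_mul_condAvg_mul_condAvg_of_ker_le (hW : ∀ p, 0 ≤ W p) {E : α → β'} {F : α → β}
    (h : Setoid.ker E ≤ Setoid.ker F) (v : α → ℝ) :
    ∑ q, W q * condAvg W E v q * condAvg W F v q = ∑ q, W q * v q * condAvg W F v q := by
  calc ∑ q, W q * condAvg W E v q * condAvg W F v q
      = ∑ q, W q * condAvg W F v q * condAvg W E v q := sum_congr rfl fun q _ => by ring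
    _ = ∑ q, v q * (W q * condAvg W E (condAvg W F v) q) := by
        rw [sum_mul_mul_condAvg_comm]
        exact sum_congr rfl fun q _ => by ring
    _ = ∑ q, W q * v q * condAvg W F v q := by
        simp only [mul_condAvg_condAvg_of_ker_le hW h]
        exact sum_congr rfl fun q _ => by ring

theorem sum_mul_sq_condAvg_sub_of_ker_le (hW : ∀ p, 0 ≤ W p) {F' : α → β'} {F : α → β}
    (h : Setoid.ker F' ≤ Setoid.ker F) (v : α → ℝ) :
    ∑ q, W q * (condAvg W F' v q - condAvg W F v q) ^ 2 =
      ∑ q, W q * v q * condAvg W F' v q - ∑ q, W q * v q * condAvg W F v q := by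
  have hF'F' := sum_mul_condAvg_mul_condAvg_of_ker_le hW le_rfl (F := F') v
  have hF'F := sum_mul_condAvg_mul_condAvg_of_ker_le hW h v
  have hFF := sum_mul_condAvg_mul_condAvg_of_ker_le hW le_rfl (F := F) v
  calc ∑ q, W q * (condAvg W F' v q - condAvg W F v q) ^ 2
      = ∑ q, W q * condAvg W F' v q * condAvg W F' v q
          - 2 * ∑ q, W q * condAvg W F' v q * condAvg W F v q
          + ∑ q, W q * condAvg W F v q * condAvg W F v q := by
        rw [mul_sum, ← sum_sub_distrib, ← sum_add_distrib]
        exact sum_congr rfl fun q _ => by ring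
    _ = _ := by rw [hF'F', hF'F, hFF]; ring

end CondAvg

section Energy

variable {α β β' K : Type*}

noncomputable def colorIndicator (χ : α → K) (c : K) (p : α) : ℝ :=
  if χ p = c then 1 else 0

theorem colorIndicator_nonneg (χ : α → K) (c : K) (p : α) : 0 ≤ colorIndicator χ c p := by
  unfold colorIndicator; split_ifs <;> norm_num

theorem colorIndicator_le_one (χ : α → K) (c : K) (p : α) : colorIndicator χ c p ≤ 1 := by
  unfold colorIndicator; split_ifs <;> norm_num

theorem sum_colorIndicator_mul [Fintype K] (χ : α → K) (p : α) (Y : K → ℝ) :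
    ∑ c, colorIndicator χ c p * Y c = Y (χ p) := by
  simp [colorIndicator]

variable [Fintype α] [Fintype K] {W : α → ℝ}

variable (W) in
/-- `∑_c ‖E[1_{χ = c} | F]‖²`, in the form `∑_c ⟪1_{χ = c}, E[1_{χ = c} | F]⟫`. -/
noncomputable def energy (χ : α → K) (F : α → β) : ℝ :=
  ∑ c, ∑ q, W q * colorIndicator χ c q * condAvg W F (colorIndicator χ c) q

theorem energy_eq_sum (χ : α → K) (F : α → β) :
    energy W χ F = ∑ q, W q * condAvg W F (colorIndicator χ (χ q)) q := by
  rw [energy, sum_comm]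
  refine sum_congr rfl fun q _ => ?_
  rw [← sum_colorIndicator_mul χ q fun c => W q * condAvg W F (colorIndicator χ c) q]
  exact sum_congr rfl fun c _ => by ring

theorem energy_nonneg (hW : ∀ p, 0 ≤ W p) (χ : α → K) (F : α → β) : 0 ≤ energy W χ F := by
  rw [energy_eq_sum]
  exact sum_nonneg fun q _ =>
    mul_nonneg (hW q) (condAvg_nonneg hW F (colorIndicator_nonneg χ _) q)

theorem energy_le_one (hW : ∀ p, 0 ≤ W p) (hW1 : ∑ p, W p = 1) (χ : α → K) (F : α → β) :
    energy W χ F ≤ 1 := by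
  rw [energy_eq_sum, ← hW1]
  exact sum_le_sum fun q _ =>
    mul_le_of_le_one_right (hW q) (condAvg_le_one hW F (colorIndicator_le_one χ _) q)

theorem energy_congr_ker (χ : α → K) {F₁ : α → β} {F₂ : α → β'}
    (h : Setoid.ker F₁ = Setoid.ker F₂) : energy W χ F₁ = energy W χ F₂ := by
  simp only [energy, condAvg_congr_ker h]

theorem sum_mul_condAvg_sq_sub_le_energy_sub (hW : ∀ p, 0 ≤ W p) (χ : α → K)
    {F' : α → β'} {F : α → β} (h : Setoid.ker F' ≤ Setoid.ker F) :
    ∑ q, W q * condAvg W F (fun p => (condAvg W F' (colorIndicator χ (χ q)) p -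
        condAvg W F (colorIndicator χ (χ q)) q) ^ 2) q ≤
      energy W χ F' - energy W χ F := by
  set D : K → α → ℝ := fun c p =>
    (condAvg W F' (colorIndicator χ c) p - condAvg W F (colorIndicator χ c) p) ^ 2
  have hfibre : ∀ q, condAvg W F (fun p => (condAvg W F' (colorIndicator χ (χ q)) p -
      condAvg W F (colorIndicator χ (χ q)) q) ^ 2) q = condAvg W F (D (χ q)) q :=
    fun q => condAvg_congr fun p hp => by simp only [D, condAvg_eq_of_eq (F := F) _ hp.symm]
  calc ∑ q, W q * condAvg W F (fun p => (condAvg W F' (colorIndicator χ (χ q)) p -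
        condAvg W F (colorIndicator χ (χ q)) q) ^ 2) q
      = ∑ c, ∑ q, W q * colorIndicator χ c q * condAvg W F (D c) q := by
        rw [sum_comm]
        refine sum_congr rfl fun q _ => ?_
        rw [hfibre, ← sum_colorIndicator_mul χ q fun c => W q * condAvg W F (D c) q]
        exact sum_congr rfl fun c _ => by ring
    _ = ∑ c, ∑ q, W q * D c q * condAvg W F (colorIndicator χ c) q := by
        simp only [sum_mul_mul_condAvg_comm]
    _ ≤ ∑ c, ∑ q, W q * D c q := by
        refine sum_le_sum fun c _ => sum_le_sum fun q _ => mul_le_of_le_one_right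
          (mul_nonneg (hW q) (sq_nonneg _)) (condAvg_le_one hW F (colorIndicator_le_one χ c) q)
    _ = energy W χ F' - energy W χ F := by
        simp only [D, sum_mul_sq_condAvg_sub_of_ker_le hW h, energy, sum_sub_distrib]

end Energy

section RandomPMap

variable {r : ℕ} {Ω : Fin r → Type} [∀ i, Fintype (Ω i)] {w : ∀ i, Ω i → ℝ}

theorem pmapWeight_nonneg (hw : ∀ i x, 0 ≤ w i x) {h : ℕ} (φ : PMap Ω h) :
    0 ≤ pmapWeight Ω w φ :=
  prod_nonneg fun i _ => prod_nonneg fun a _ => hw i (φ i a)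

theorem sum_pmapWeight (htot : ∀ i, ∑ x : Ω i, w i x = 1) (h : ℕ) :
    ∑ φ : PMap Ω h, pmapWeight Ω w φ = 1 := by
  calc ∑ φ : PMap Ω h, pmapWeight Ω w φ = ∏ i, ∑ g : Fin h → Ω i, ∏ a, w i (g a) :=
        (Fintype.prod_sum fun i (g : Fin h → Ω i) => ∏ a, w i (g a)).symm
    _ = 1 := by simp only [← Fintype.prod_sum, htot, prod_const_one]

theorem EPhi_mono (hw : ∀ i x, 0 ≤ w i x) {h : ℕ} {f g : PMap Ω h → ℝ}
    (hfg : ∀ φ, f φ ≤ g φ) : EPhi Ω w h f ≤ EPhi Ω w h g :=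
  sum_le_sum fun φ _ => mul_le_mul_of_nonneg_left (hfg φ) (pmapWeight_nonneg hw φ)

theorem EPhi_nonneg (hw : ∀ i x, 0 ≤ w i x) {h : ℕ} {f : PMap Ω h → ℝ}
    (hf : ∀ φ, 0 ≤ f φ) : 0 ≤ EPhi Ω w h f :=
  sum_nonneg fun φ _ => mul_nonneg (pmapWeight_nonneg hw φ) (hf φ)

theorem EPhi_const (htot : ∀ i, ∑ x : Ω i, w i x = 1) (h : ℕ) (c : ℝ) :
    EPhi Ω w h (fun _ => c) = c := by
  rw [EPhi, ← sum_mul, sum_pmapWeight htot, one_mul]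

theorem EPhi_sub {h : ℕ} (f g : PMap Ω h → ℝ) :
    EPhi Ω w h (fun φ => f φ - g φ) = EPhi Ω w h f - EPhi Ω w h g := by
  simp only [EPhi, mul_sub, sum_sub_distrib]

theorem sum_mul_EPhi {α : Type*} [Fintype α] {h : ℕ} (c : α → ℝ) (g : α → PMap Ω h → ℝ) :
    ∑ q, c q * EPhi Ω w h (g q) = EPhi Ω w h (fun φ => ∑ q, c q * g q φ) := by
  simp only [EPhi, mul_sum]
  rw [sum_comm]
  exact sum_congr rfl fun φ _ => sum_congr rfl fun q _ => by ring

theorem sq_EPhi_le (hw : ∀ i x, 0 ≤ w i x) (htot : ∀ i, ∑ x : Ω i, w i x = 1) {h : ℕ}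
    (f : PMap Ω h → ℝ) : EPhi Ω w h f ^ 2 ≤ EPhi Ω w h (fun φ => f φ ^ 2) :=
  sq_sum_mul_le_sum_mul_sq (fun φ _ => pmapWeight_nonneg hw φ) (sum_pmapWeight htot h) f

def PMap.append {M N : ℕ} (φ : PMap Ω M) (ψ : PMap Ω N) : PMap Ω (M + N) :=
  fun i => Fin.append (φ i) (ψ i)

theorem pmapWeight_append {M N : ℕ} (φ : PMap Ω M) (ψ : PMap Ω N) :
    pmapWeight Ω w (PMap.append φ ψ) = pmapWeight Ω w φ * pmapWeight Ω w ψ := by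
  simp only [pmapWeight, PMap.append, Fin.prod_univ_add, Fin.append_left, Fin.append_right,
    prod_mul_distrib]

theorem EPhi_add (M N : ℕ) (f : PMap Ω (M + N) → ℝ) :
    EPhi Ω w (M + N) f = EPhi Ω w M (fun φ => EPhi Ω w N (fun ψ => f (PMap.append φ ψ))) := by
  let e : PMap Ω M × PMap Ω N ≃ PMap Ω (M + N) :=
    (Equiv.arrowProdEquivProdArrow _ _ _).symm.trans
      (Equiv.piCongrRight fun _ => Fin.appendEquiv M N)
  rw [EPhi, ← Fintype.sum_equiv e (fun φψ => pmapWeight Ω w (PMap.append φψ.1 φψ.2) *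
    f (PMap.append φψ.1 φψ.2)) _ fun _ => rfl, Fintype.sum_prod_type]
  simp only [EPhi, pmapWeight_append, mul_sum, mul_assoc]

end RandomPMap

section Frames

variable {r : ℕ} {Ω : Fin r → Type} {w : ∀ i, Ω i → ℝ} {K₁ K₂ : Type}

variable (w) in
def pairWeight (i j : Fin r) (q : Ω i × Ω j) : ℝ := w i q.1 * w j q.2

def frame (H : CGraph Ω K₁ K₂) (i j : Fin r) (q : Ω i × Ω j) : K₁ × K₁ :=
  (H.vCol i q.1, H.vCol j q.2)

def edgeColor (H : CGraph Ω K₁ K₂) (i j : Fin r) (q : Ω i × Ω j) : K₂ := H.eCol i j q.1 q.2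

theorem pairWeight_nonneg (hw : ∀ i x, 0 ≤ w i x) (i j : Fin r) (q : Ω i × Ω j) :
    0 ≤ pairWeight w i j q :=
  mul_nonneg (hw i q.1) (hw j q.2)

variable [∀ i, Fintype (Ω i)]

theorem sum_pairWeight (htot : ∀ i, ∑ x : Ω i, w i x = 1) (i j : Fin r) :
    ∑ q : Ω i × Ω j, pairWeight w i j q = 1 := by
  simp only [pairWeight, Fintype.sum_prod_type, ← mul_sum, htot, mul_one]

theorem dE_eq_condEE (H : CGraph Ω K₁ K₂) (i j : Fin r) (c : K₂) (ci cj : K₁) :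
    dE Ω w H i j c ci cj = condEE Ω w i j (fun x y => H.vCol i x = ci ∧ H.vCol j y = cj)
      (fun x y => if H.eCol i j x y = c then 1 else 0) := by
  unfold dE condEE
  congr 1 <;> refine sum_congr rfl fun x _ => sum_congr rfl fun y _ => ?_ <;> split_ifs <;>
    simp_all

theorem condEE_vCol_eq_condAvg (H : CGraph Ω K₁ K₂) {i j : Fin r} (x' : Ω i) (y' : Ω j)
    (f : Ω i → Ω j → ℝ) :
    condEE Ω w i j (fun x y => H.vCol i x = H.vCol i x' ∧ H.vCol j y = H.vCol j y') f =
      condAvg (pairWeight w i j) (frame H i j) (fun q => f q.1 q.2) (x', y') := by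
  simp only [condEE, condAvg, frame, pairWeight, Fintype.sum_prod_type, Prod.mk.injEq]
  congr!

variable [Fintype K₂]

variable (w) in
noncomputable def edgeEnergy (H : CGraph Ω K₁ K₂) (i j : Fin r) : ℝ :=
  energy (pairWeight w i j) (edgeColor H i j) (frame H i j)

variable [Fintype K₁]

theorem eta_eq_EPhi_condAvg (H : CGraph Ω K₁ K₂) (N : ℕ)
    (i j : Fin r) (q : Ω i × Ω j) :
    eta Ω w H N i j (edgeColor H i j q) (H.vCol i q.1) (H.vCol j q.2) =
      EPhi Ω w N fun ψ => condAvg (pairWeight w i j) (frame H i j)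
        (fun p => (condAvg (pairWeight w i j) (frame (regz Ω H ψ) i j)
            (colorIndicator (edgeColor H i j) (edgeColor H i j q)) p -
          condAvg (pairWeight w i j) (frame H i j)
            (colorIndicator (edgeColor H i j) (edgeColor H i j q)) q) ^ 2) q := by
  simp only [eta, frameRel, dE_eq_condEE, condEE_vCol_eq_condAvg]
  rfl

theorem eta_nonneg (hw : ∀ i x, 0 ≤ w i x) (H : CGraph Ω K₁ K₂)
    (N : ℕ) (i j : Fin r) (q : Ω i × Ω j) :
    0 ≤ eta Ω w H N i j (edgeColor H i j q) (H.vCol i q.1) (H.vCol j q.2) := by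
  rw [eta_eq_EPhi_condAvg]
  exact EPhi_nonneg hw fun ψ =>
    condAvg_nonneg (pairWeight_nonneg hw i j) _ (fun p => sq_nonneg _) q

theorem ker_frame_regz_le (H : CGraph Ω K₁ K₂) {N : ℕ}
    (ψ : PMap Ω N) (i j : Fin r) : Setoid.ker (frame (regz Ω H ψ) i j) ≤ Setoid.ker (frame H i j) :=
  fun _ _ hpq => congrArg (fun z => (z.1.1, z.2.1)) hpq

theorem sum_pairWeight_mul_eta_le (hw : ∀ i x, 0 ≤ w i x)
    (htot : ∀ i, ∑ x : Ω i, w i x = 1) (H : CGraph Ω K₁ K₂) (N : ℕ) (i j : Fin r) :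
    ∑ q, pairWeight w i j q * eta Ω w H N i j (edgeColor H i j q) (H.vCol i q.1) (H.vCol j q.2) ≤
      EPhi Ω w N (fun ψ => edgeEnergy w (regz Ω H ψ) i j) - edgeEnergy w H i j := by
  calc ∑ q, pairWeight w i j q *
        eta Ω w H N i j (edgeColor H i j q) (H.vCol i q.1) (H.vCol j q.2)
      = EPhi Ω w N fun ψ => ∑ q, pairWeight w i j q * condAvg (pairWeight w i j) (frame H i j)
          (fun p => (condAvg (pairWeight w i j) (frame (regz Ω H ψ) i j)
              (colorIndicator (edgeColor H i j) (edgeColor H i j q)) p -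
            condAvg (pairWeight w i j) (frame H i j)
              (colorIndicator (edgeColor H i j) (edgeColor H i j q)) q) ^ 2) q := by
        simp only [eta_eq_EPhi_condAvg, sum_mul_EPhi]
    _ ≤ EPhi Ω w N fun ψ => edgeEnergy w (regz Ω H ψ) i j - edgeEnergy w H i j :=
        EPhi_mono hw fun ψ => sum_mul_condAvg_sq_sub_le_energy_sub (pairWeight_nonneg hw i j)
          (edgeColor H i j) (ker_frame_regz_le H ψ i j)
    _ = _ := by rw [EPhi_sub, EPhi_const htot]

theorem regz_vCol_eq_iff (G : CGraph Ω K₁ K₂) {M : ℕ}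
    (φ : PMap Ω M) (i : Fin r) (x x' : Ω i) :
    (regz Ω G φ).vCol i x = (regz Ω G φ).vCol i x' ↔
      G.vCol i x = G.vCol i x' ∧
        ∀ j, j ≠ i → ∀ b, G.eCol i j x (φ j b) = G.eCol i j x' (φ j b) := by
  simp only [regz, Prod.ext_iff, funext_iff]
  refine and_congr_right fun _ => forall_congr' fun j => ?_
  by_cases hj : j = i <;> simp [hj]

theorem regz_regz_vCol_eq_iff (G : CGraph Ω K₁ K₂) {M N : ℕ}
    (φ : PMap Ω M) (ψ : PMap Ω N) (i : Fin r) (x x' : Ω i) :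
    (regz Ω (regz Ω G φ) ψ).vCol i x = (regz Ω (regz Ω G φ) ψ).vCol i x' ↔
      (regz Ω G (PMap.append φ ψ)).vCol i x = (regz Ω G (PMap.append φ ψ)).vCol i x' := by
  simp only [regz_vCol_eq_iff, Fin.forall_fin_add, PMap.append, Fin.append_left,
    Fin.append_right, ← forall_and, and_assoc]
  rfl

theorem edgeEnergy_regz_regz (G : CGraph Ω K₁ K₂) {M N : ℕ}
    (φ : PMap Ω M) (ψ : PMap Ω N) (i j : Fin r) :
    edgeEnergy w (regz Ω (regz Ω G φ) ψ) i j = edgeEnergy w (regz Ω G (PMap.append φ ψ)) i j :=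
  energy_congr_ker _ <| Setoid.ext fun p q => by
    simp only [Setoid.ker_def, frame, Prod.mk.injEq, regz_regz_vCol_eq_iff]

end Frames

section LevelEnergy

variable {r : ℕ} {Ω : Fin r → Type} [∀ i, Fintype (Ω i)] {w : ∀ i, Ω i → ℝ}
  {K₁ K₂ : Type} [Fintype K₁] [Fintype K₂]

variable (w) in
noncomputable def levelEnergy (G : CGraph Ω K₁ K₂) (i j : Fin r) (M : ℕ) : ℝ :=
  EPhi Ω w M fun φ => edgeEnergy w (regz Ω G φ) i j

theorem levelEnergy_nonneg (hw : ∀ i x, 0 ≤ w i x) (G : CGraph Ω K₁ K₂) (i j : Fin r) (M : ℕ) :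
    0 ≤ levelEnergy w G i j M :=
  EPhi_nonneg hw fun _ => energy_nonneg (pairWeight_nonneg hw i j) _ _

theorem levelEnergy_le_one (hw : ∀ i x, 0 ≤ w i x) (htot : ∀ i, ∑ x : Ω i, w i x = 1)
    (G : CGraph Ω K₁ K₂) (i j : Fin r) (M : ℕ) : levelEnergy w G i j M ≤ 1 :=
  (EPhi_mono hw fun _ => energy_le_one (pairWeight_nonneg hw i j) (sum_pairWeight htot i j)
    _ _).trans_eq (EPhi_const htot M 1)

theorem EPhi_sum_pairWeight_mul_eta_le (hw : ∀ i x, 0 ≤ w i x)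
    (htot : ∀ i, ∑ x : Ω i, w i x = 1) (G : CGraph Ω K₁ K₂) (i j : Fin r) (M N : ℕ) :
    EPhi Ω w M (fun φ => ∑ q, pairWeight w i j q * eta Ω w (regz Ω G φ) N i j
        (edgeColor (regz Ω G φ) i j q) ((regz Ω G φ).vCol i q.1) ((regz Ω G φ).vCol j q.2)) ≤
      levelEnergy w G i j (M + N) - levelEnergy w G i j M := by
  calc _ ≤ EPhi Ω w M (fun φ => EPhi Ω w N (fun ψ => edgeEnergy w (regz Ω (regz Ω G φ) ψ) i j) -
          edgeEnergy w (regz Ω G φ) i j) :=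
        EPhi_mono hw fun φ => sum_pairWeight_mul_eta_le hw htot (regz Ω G φ) N i j
    _ = _ := by simp only [EPhi_sub, levelEnergy, EPhi_add, edgeEnergy_regz_regz]

theorem levelEnergy_monotone (hw : ∀ i x, 0 ≤ w i x) (htot : ∀ i, ∑ x : Ω i, w i x = 1)
    (G : CGraph Ω K₁ K₂) (i j : Fin r) : Monotone (levelEnergy w G i j) := by
  intro M M' hM
  obtain ⟨N, rfl⟩ := Nat.exists_eq_add_of_le hM
  refine sub_nonneg.mp (le_trans ?_ (EPhi_sum_pairWeight_mul_eta_le hw htot G i j M N))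
  exact EPhi_nonneg hw fun φ => sum_nonneg fun q _ =>
    mul_nonneg (pairWeight_nonneg hw i j q) (eta_nonneg hw (regz Ω G φ) N i j q)

theorem sq_EPhi_sum_mul_sqrt_eta_le (hw : ∀ i x, 0 ≤ w i x)
    (htot : ∀ i, ∑ x : Ω i, w i x = 1) (G : CGraph Ω K₁ K₂) (i j : Fin r) (M N : ℕ) :
    EPhi Ω w M (fun φ => ∑ x : Ω i, ∑ y : Ω j, w i x * w j y *
        Real.sqrt (eta Ω w (regz Ω G φ) N i j ((regz Ω G φ).eCol i j x y)
          ((regz Ω G φ).vCol i x) ((regz Ω G φ).vCol j y))) ^ 2 ≤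
      levelEnergy w G i j (M + N) - levelEnergy w G i j M := by
  refine (sq_EPhi_le hw htot _).trans <| le_trans (EPhi_mono hw fun φ => ?_)
    (EPhi_sum_pairWeight_mul_eta_le hw htot G i j M N)
  rw [← Fintype.sum_prod_type']
  refine (sq_sum_mul_le_sum_mul_sq (fun q _ => pairWeight_nonneg hw i j q)
    (sum_pairWeight htot i j) _).trans_eq (sum_congr rfl fun q _ =>
      congrArg _ (Real.sq_sqrt (eta_nonneg hw _ N i j q)))

end LevelEnergy

theorem sqrt_eta_average_bound_general {r : ℕ} (h b₁ b₂ : ℕ)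
    (hb₂ : 1 ≤ b₂) (ε : ℝ)
    (m : ℕ → ℕ)
    (hmrec : ∀ n : ℕ, m n + Mconst r h b₁ b₂ ε (m n) * h ≤ m (n + 1))
    (nt : ℕ)
    (Ω : Fin r → Type) [∀ i, Fintype (Ω i)]
    (w : ∀ i, Ω i → ℝ) (hw : ∀ i x, 0 ≤ w i x) (htot : ∀ i, ∑ x : Ω i, w i x = 1)
    {K₁ K₂ : Type} [Fintype K₁] [Fintype K₂] (G : CGraph Ω K₁ K₂)
    (i j : Fin r) :
    ((1 / nt : ℝ) * ∑ n ∈ Finset.range nt,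
        EPhi Ω w (m n) (fun φ =>
          ∑ x : Ω i, ∑ y : Ω j, w i x * w j y *
            Real.sqrt (eta Ω w (regz Ω G φ) (Mconst r h b₁ b₂ ε (m n) * h) i j
              ((regz Ω G φ).eCol i j x y)
              ((regz Ω G φ).vCol i x) ((regz Ω G φ).vCol j y)))) ^ 2 ≤
      b₂ / nt := by
  refine (sq_mean_le_of_sq_le_sub (a := fun n => levelEnergy w G i j (m n)) (fun n => ?_)
    (levelEnergy_nonneg hw G i j _) (fun n => levelEnergy_le_one hw htot G i j _) nt).trans ?_
  · exact (sq_EPhi_sum_mul_sqrt_eta_le hw htot G i j _ _).trans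
      (sub_le_sub_right (levelEnergy_monotone hw htot G i j (hmrec n)) _)
  · gcongr
    exact_mod_cast hb₂

/-- eq. (\ref{lj20}): bounding the average error size by
telescoping. If `m 0 = 0` and `m (n+1) ≥ m n + M(m n)·h`, then for every
index pair `I = {i,j}`:
`(E_n E_{φ∈Φ(m n)} E_{ẽ∈Ω_I}[√(η(G*⟨ẽ⟩))])² ≤ b₂/ñ`, where `G* = G/φ` and `η`
is computed for `G*` with `M = M(m n)`. -/
theorem sqrt_eta_average_bound {r : ℕ} (hr : 2 ≤ r) (h b₁ b₂ : ℕ)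
    (hh : 1 ≤ h) (hb₁ : 1 ≤ b₁) (hb₂ : 1 ≤ b₂) (ε : ℝ) (hε : 0 < ε)
    (m : ℕ → ℕ) (hm0 : m 0 = 0)
    (hmrec : ∀ n : ℕ, m n + Mconst r h b₁ b₂ ε (m n) * h ≤ m (n + 1))
    (nt : ℕ) (hnt : 1 ≤ nt)
    (Ω : Fin r → Type) [∀ i, Fintype (Ω i)] [∀ i, Nonempty (Ω i)]
    (w : ∀ i, Ω i → ℝ) (hw : ∀ i x, 0 ≤ w i x) (htot : ∀ i, ∑ x : Ω i, w i x = 1)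
    {K₁ K₂ : Type} [Fintype K₁] [Fintype K₂] (G : CGraph Ω K₁ K₂)
    (hG : G.Bounded b₁ b₂) (i j : Fin r) (hij : i ≠ j) :
    ((1 / nt : ℝ) * ∑ n ∈ Finset.range nt,
        EPhi Ω w (m n) (fun φ =>
          ∑ x : Ω i, ∑ y : Ω j, w i x * w j y *
            Real.sqrt (eta Ω w (regz Ω G φ) (Mconst r h b₁ b₂ ε (m n) * h) i j
              ((regz Ω G φ).eCol i j x y)
              ((regz Ω G φ).vCol i x) ((regz Ω G φ).vCol j y)))) ^ 2 ≤
      b₂ / nt :=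
  sqrt_eta_average_bound_general h b₁ b₂ hb₂ ε m hmrec nt Ω w hw htot G i j
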